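/- For m, n ∈ ℕ and the entropies η_m as defined, there is a constant C(m,n) such that η_m(ρ,u) · η_n(ρ,u) ≤ C(m,n) ρ η_{m+n}(ρ,u) for all ρ ≥ 0, u ∈ ℝ. -/

import Mathlib

/-!
Write `s = ρ^θ` and `w(z) = (1 - z²)^λ`. For `|z| ≤ 1` one has `|u + zs| ≤ |u| + |s|`, and after
symmetrising `z ↦ -z`, one of `|u + zs|`, `|u - zs|` dominates both `|u|` and `|zs|`; integrating
against `w` gives `η_k(ρ, u) ≍ ρ (u^{2k} + s^{2k})`. The estimate then reduces to
`(a^m + b^m)(a^n + b^n) ≤ 2 (a^{m+n} + b^{m+n})` for `a = u²`, `b = s²`, which holds because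
`a^m - b^m` and `a^n - b^n` have the same sign.
-/

open MeasureTheory intervalIntegral

/-- The entropy `η_m(ρ,u) = ρ c_λ ∫_{-1}^1 (u + z ρ^θ)^{2m} (1-z^2)^λ dz`,
with `c_λ = (∫_{-1}^1 (1-z^2)^λ dz)⁻¹`. -/
noncomputable def entropyEta (θ lam : ℝ) (m : ℕ) (ρ u : ℝ) : ℝ :=
  ρ * (∫ z in (-1 : ℝ)..1, (1 - z ^ 2) ^ lam)⁻¹ *
    ∫ z in (-1 : ℝ)..1, (u + z * ρ ^ θ) ^ (2 * m) * (1 - z ^ 2) ^ lam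

lemma max_pow_le_pow_add_pow {p q : ℝ} (hp : 0 ≤ p) (hq : 0 ≤ q) (k : ℕ) :
    max p q ^ k ≤ p ^ k + q ^ k := by
  rcases le_total p q with h | h
  · rw [max_eq_right h]; exact le_add_of_nonneg_left (pow_nonneg hp k)
  · rw [max_eq_left h]; exact le_add_of_nonneg_right (pow_nonneg hq k)

lemma pow_add_pow_mul_pow_add_pow_le {a b : ℝ} (ha : 0 ≤ a) (hb : 0 ≤ b) (m n : ℕ) :
    (a ^ m + b ^ m) * (a ^ n + b ^ n) ≤ 2 * (a ^ (m + n) + b ^ (m + n)) := by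
  have hsame_sign : 0 ≤ (a ^ m - b ^ m) * (a ^ n - b ^ n) := by
    rcases le_total a b with h | h
    · exact mul_nonneg_of_nonpos_of_nonpos (sub_nonpos.2 (pow_le_pow_left₀ ha h m))
        (sub_nonpos.2 (pow_le_pow_left₀ ha h n))
    · exact mul_nonneg (sub_nonneg.2 (pow_le_pow_left₀ hb h m))
        (sub_nonneg.2 (pow_le_pow_left₀ hb h n))
  rw [pow_add, pow_add]
  linarith

lemma add_mul_pow_two_mul_le (k : ℕ) (u s : ℝ) {z : ℝ} (hz : z ^ 2 ≤ 1) :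
    (u + z * s) ^ (2 * k) ≤ 4 ^ k * (u ^ (2 * k) + s ^ (2 * k)) := by
  have hsq : (u + z * s) ^ 2 ≤ 4 * max (u ^ 2) (s ^ 2) := by
    nlinarith [le_max_left (u ^ 2) (s ^ 2), le_max_right (u ^ 2) (s ^ 2),
      sq_nonneg (u - z * s), mul_le_mul_of_nonneg_right hz (sq_nonneg s)]
  calc (u + z * s) ^ (2 * k) = ((u + z * s) ^ 2) ^ k := pow_mul _ _ _
    _ ≤ (4 * max (u ^ 2) (s ^ 2)) ^ k := pow_le_pow_left₀ (sq_nonneg _) hsq k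
    _ = 4 ^ k * max (u ^ 2) (s ^ 2) ^ k := mul_pow _ _ _
    _ ≤ 4 ^ k * (u ^ (2 * k) + s ^ (2 * k)) := by
      rw [pow_mul, pow_mul]
      gcongr
      exact max_pow_le_pow_add_pow (sq_nonneg u) (sq_nonneg s) k

lemma pow_two_mul_add_pow_two_mul_le (k : ℕ) (u a : ℝ) :
    u ^ (2 * k) + a ^ (2 * k) ≤ 2 * ((u + a) ^ (2 * k) + (u - a) ^ (2 * k)) := by
  set B := max ((u + a) ^ 2) ((u - a) ^ 2)
  have hB : (u + a) ^ 2 + (u - a) ^ 2 ≤ 2 * B := by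
    linarith [le_max_left ((u + a) ^ 2) ((u - a) ^ 2), le_max_right ((u + a) ^ 2) ((u - a) ^ 2)]
  have hu : (u ^ 2) ^ k ≤ B ^ k := pow_le_pow_left₀ (sq_nonneg u) (by nlinarith [sq_nonneg a]) k
  have ha : (a ^ 2) ^ k ≤ B ^ k := pow_le_pow_left₀ (sq_nonneg a) (by nlinarith [sq_nonneg u]) k
  have hB_pow := max_pow_le_pow_add_pow (sq_nonneg (u + a)) (sq_nonneg (u - a)) k
  simp only [pow_mul]
  linarith

section Weight

variable {lam : ℝ}

lemma continuous_one_sub_sq_rpow (hlam : 0 ≤ lam) : Continuous fun z : ℝ => (1 - z ^ 2) ^ lam :=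
  (Real.continuous_rpow_const hlam).comp (by fun_prop)

lemma one_sub_sq_rpow_nonneg {z : ℝ} (hz : z ∈ Set.Icc (-1 : ℝ) 1) : 0 ≤ (1 - z ^ 2) ^ lam :=
  Real.rpow_nonneg (by nlinarith [hz.1, hz.2]) lam

lemma integral_one_sub_sq_rpow_pos (hlam : 0 ≤ lam) :
    0 < ∫ z in (-1 : ℝ)..1, (1 - z ^ 2) ^ lam :=
  intervalIntegral_pos_of_pos_on ((continuous_one_sub_sq_rpow hlam).intervalIntegrable _ _)
    (fun z hz => Real.rpow_pos_of_pos (by nlinarith [hz.1, hz.2]) lam) (by norm_num)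

lemma integral_pow_two_mul_mul_one_sub_sq_rpow_pos (hlam : 0 ≤ lam) (k : ℕ) :
    0 < ∫ z in (-1 : ℝ)..1, z ^ (2 * k) * (1 - z ^ 2) ^ lam := by
  have hint : ∀ a b : ℝ, IntervalIntegrable (fun z => z ^ (2 * k) * (1 - z ^ 2) ^ lam) volume a b :=
    fun a b => ((continuous_pow _).mul (continuous_one_sub_sq_rpow hlam)).intervalIntegrable a b
  rw [← integral_add_adjacent_intervals (hint (-1) 0) (hint 0 1)]
  have hneg : 0 ≤ ∫ z in (-1 : ℝ)..0, z ^ (2 * k) * (1 - z ^ 2) ^ lam :=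
    integral_nonneg (by norm_num) fun z hz =>
      mul_nonneg (by rw [pow_mul]; positivity)
        (Real.rpow_nonneg (by nlinarith [hz.1, hz.2]) lam)
  have hpos : 0 < ∫ z in (0 : ℝ)..1, z ^ (2 * k) * (1 - z ^ 2) ^ lam :=
    intervalIntegral_pos_of_pos_on (hint 0 1)
      (fun z hz => mul_pos (pow_pos hz.1 _) (Real.rpow_pos_of_pos (by nlinarith [hz.1, hz.2]) lam))
      (by norm_num)
  linarith

lemma integral_add_mul_pow_mul_one_sub_sq_rpow_le (hlam : 0 ≤ lam) (k : ℕ) (u s : ℝ) :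
    ∫ z in (-1 : ℝ)..1, (u + z * s) ^ (2 * k) * (1 - z ^ 2) ^ lam ≤
      4 ^ k * (u ^ (2 * k) + s ^ (2 * k)) * ∫ z in (-1 : ℝ)..1, (1 - z ^ 2) ^ lam := by
  have hw := continuous_one_sub_sq_rpow hlam
  rw [← intervalIntegral.integral_const_mul]
  refine integral_mono_on (by norm_num) (((by fun_prop : Continuous fun z : ℝ =>
      (u + z * s) ^ (2 * k)).mul hw).intervalIntegrable _ _)
    ((continuous_const.mul hw).intervalIntegrable _ _) fun z hz => ?_
  exact mul_le_mul_of_nonneg_right (add_mul_pow_two_mul_le k u s (by nlinarith [hz.1, hz.2]))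
    (one_sub_sq_rpow_nonneg hz)

lemma integral_sub_mul_pow_mul_one_sub_sq_rpow (k : ℕ) (u s : ℝ) :
    ∫ z in (-1 : ℝ)..1, (u - z * s) ^ (2 * k) * (1 - z ^ 2) ^ lam =
      ∫ z in (-1 : ℝ)..1, (u + z * s) ^ (2 * k) * (1 - z ^ 2) ^ lam := by
  have h := integral_comp_neg (a := -1) (b := 1)
    fun z => (u + z * s) ^ (2 * k) * (1 - z ^ 2) ^ lam
  simp only [neg_mul, neg_sq, ← sub_eq_add_neg, neg_neg] at h
  exact h

lemma le_integral_add_mul_pow_mul_one_sub_sq_rpow (hlam : 0 ≤ lam) (k : ℕ) (u s : ℝ) :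
    (u ^ (2 * k) * (∫ z in (-1 : ℝ)..1, (1 - z ^ 2) ^ lam) +
        s ^ (2 * k) * ∫ z in (-1 : ℝ)..1, z ^ (2 * k) * (1 - z ^ 2) ^ lam) / 4 ≤
      ∫ z in (-1 : ℝ)..1, (u + z * s) ^ (2 * k) * (1 - z ^ 2) ^ lam := by
  have hw := continuous_one_sub_sq_rpow hlam
  have hplus : Continuous fun z : ℝ => (u + z * s) ^ (2 * k) * (1 - z ^ 2) ^ lam :=
    (by fun_prop : Continuous fun z : ℝ => (u + z * s) ^ (2 * k)).mul hw
  have hminus : Continuous fun z : ℝ => (u - z * s) ^ (2 * k) * (1 - z ^ 2) ^ lam :=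
    (by fun_prop : Continuous fun z : ℝ => (u - z * s) ^ (2 * k)).mul hw
  have hconst : Continuous fun z : ℝ => u ^ (2 * k) * (1 - z ^ 2) ^ lam := continuous_const.mul hw
  have hmoment : Continuous fun z : ℝ => s ^ (2 * k) * (z ^ (2 * k) * (1 - z ^ 2) ^ lam) :=
    continuous_const.mul ((continuous_pow _).mul hw)
  have hmono : ∫ z in (-1 : ℝ)..1,
        u ^ (2 * k) * (1 - z ^ 2) ^ lam + s ^ (2 * k) * (z ^ (2 * k) * (1 - z ^ 2) ^ lam) ≤
      ∫ z in (-1 : ℝ)..1, 2 * ((u + z * s) ^ (2 * k) * (1 - z ^ 2) ^ lam +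
        (u - z * s) ^ (2 * k) * (1 - z ^ 2) ^ lam) := by
    refine integral_mono_on (by norm_num) ((hconst.add hmoment).intervalIntegrable _ _)
      ((continuous_const.mul (hplus.add hminus)).intervalIntegrable _ _) fun z hz => ?_
    have hkey := pow_two_mul_add_pow_two_mul_le k u (z * s)
    rw [mul_pow] at hkey
    have := mul_le_mul_of_nonneg_right hkey
      (one_sub_sq_rpow_nonneg (lam := lam) hz)
    linarith
  rw [integral_add (hconst.intervalIntegrable _ _) (hmoment.intervalIntegrable _ _),
    intervalIntegral.integral_const_mul, intervalIntegral.integral_const_mul,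
    intervalIntegral.integral_const_mul,
    integral_add (hplus.intervalIntegrable _ _) (hminus.intervalIntegrable _ _),
    integral_sub_mul_pow_mul_one_sub_sq_rpow] at hmono
  linarith

end Weight

section Entropy

variable (θ : ℝ) {lam : ℝ}

lemma entropyEta_le (hlam : 0 ≤ lam) (k : ℕ) {ρ : ℝ} (hρ : 0 ≤ ρ) (u : ℝ) :
    entropyEta θ lam k ρ u ≤ 4 ^ k * (ρ * (u ^ (2 * k) + (ρ ^ θ) ^ (2 * k))) := by
  have hA := integral_one_sub_sq_rpow_pos hlam
  calc entropyEta θ lam k ρ u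
      ≤ ρ * (∫ z in (-1 : ℝ)..1, (1 - z ^ 2) ^ lam)⁻¹ *
          (4 ^ k * (u ^ (2 * k) + (ρ ^ θ) ^ (2 * k)) * ∫ z in (-1 : ℝ)..1, (1 - z ^ 2) ^ lam) := by
        unfold entropyEta
        gcongr
        exact integral_add_mul_pow_mul_one_sub_sq_rpow_le hlam k u _
    _ = 4 ^ k * (ρ * (u ^ (2 * k) + (ρ ^ θ) ^ (2 * k))) := by
        field_simp

lemma exists_pos_mul_le_entropyEta (hlam : 0 ≤ lam) (k : ℕ) :
    ∃ c > 0, ∀ ρ u : ℝ, 0 ≤ ρ →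
      c * (ρ * (u ^ (2 * k) + (ρ ^ θ) ^ (2 * k))) ≤ entropyEta θ lam k ρ u := by
  set A := ∫ z in (-1 : ℝ)..1, (1 - z ^ 2) ^ lam
  set M := ∫ z in (-1 : ℝ)..1, z ^ (2 * k) * (1 - z ^ 2) ^ lam
  have hA : 0 < A := integral_one_sub_sq_rpow_pos hlam
  have hM : 0 < M := integral_pow_two_mul_mul_one_sub_sq_rpow_pos hlam k
  refine ⟨min A M / (4 * A), by positivity, fun ρ u hρ => ?_⟩
  have hu : 0 ≤ u ^ (2 * k) := by rw [pow_mul]; positivity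
  have hs : 0 ≤ (ρ ^ θ) ^ (2 * k) := by rw [pow_mul]; positivity
  have hmin : min A M * (u ^ (2 * k) + (ρ ^ θ) ^ (2 * k)) ≤
      u ^ (2 * k) * A + (ρ ^ θ) ^ (2 * k) * M := by
    nlinarith [min_le_left A M, min_le_right A M]
  calc min A M / (4 * A) * (ρ * (u ^ (2 * k) + (ρ ^ θ) ^ (2 * k)))
      = ρ * A⁻¹ * (min A M * (u ^ (2 * k) + (ρ ^ θ) ^ (2 * k)) / 4) := by
        field_simp
    _ ≤ ρ * A⁻¹ * ((u ^ (2 * k) * A + (ρ ^ θ) ^ (2 * k) * M) / 4) := by gcongr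
    _ ≤ entropyEta θ lam k ρ u := by
        unfold entropyEta
        gcongr
        exact le_integral_add_mul_pow_mul_one_sub_sq_rpow hlam k u _

lemma entropyEta_nonneg (hlam : 0 ≤ lam) (k : ℕ) {ρ : ℝ} (hρ : 0 ≤ ρ) (u : ℝ) :
    0 ≤ entropyEta θ lam k ρ u := by
  obtain ⟨c, hc, hle⟩ := exists_pos_mul_le_entropyEta θ hlam k
  refine le_trans ?_ (hle ρ u hρ)
  have : 0 ≤ u ^ (2 * k) + (ρ ^ θ) ^ (2 * k) := by simp only [pow_mul]; positivity
  positivity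

end Entropy

theorem stmt1_general (θ lam : ℝ) (hlam : 0 < lam) (m n : ℕ) :
    ∃ C : ℝ, 0 < C ∧ ∀ ρ u : ℝ, 0 ≤ ρ →
      entropyEta θ lam m ρ u * entropyEta θ lam n ρ u ≤
        C * (ρ * entropyEta θ lam (m + n) ρ u) := by
  obtain ⟨c, hc, hlower⟩ := exists_pos_mul_le_entropyEta θ hlam.le (m + n)
  refine ⟨2 * 4 ^ m * 4 ^ n / c, by positivity, fun ρ u hρ => ?_⟩
  set P : ℕ → ℝ := fun k => u ^ (2 * k) + (ρ ^ θ) ^ (2 * k)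
  have hP : ∀ k, 0 ≤ P k := fun k => by simp only [P, pow_mul]; positivity
  have hPP : P m * P n ≤ 2 * P (m + n) := by
    simpa only [P, pow_mul] using
      pow_add_pow_mul_pow_add_pow_le (sq_nonneg u) (sq_nonneg (ρ ^ θ)) m n
  calc entropyEta θ lam m ρ u * entropyEta θ lam n ρ u
      ≤ 4 ^ m * (ρ * P m) * (4 ^ n * (ρ * P n)) :=
        mul_le_mul (entropyEta_le θ hlam.le m hρ u) (entropyEta_le θ hlam.le n hρ u)
          (entropyEta_nonneg θ hlam.le n hρ u) (by have := hP m; positivity)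
    _ = 4 ^ m * 4 ^ n * ρ ^ 2 * (P m * P n) := by ring
    _ ≤ 4 ^ m * 4 ^ n * ρ ^ 2 * (2 * P (m + n)) := by gcongr
    _ = 2 * 4 ^ m * 4 ^ n / c * (ρ * (c * (ρ * P (m + n)))) := by field_simp
    _ ≤ 2 * 4 ^ m * 4 ^ n / c * (ρ * entropyEta θ lam (m + n) ρ u) := by
        gcongr
        exact hlower ρ u hρ

/-- Product estimate `η_m(U) · η_n(U) ≤ C(m,n) ρ η_{m+n}(U)`. -/
theorem stmt1 (θ lam : ℝ) (hθ : 0 < θ) (hlam : 0 < lam) (m n : ℕ) :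
    ∃ C : ℝ, 0 < C ∧ ∀ ρ u : ℝ, 0 ≤ ρ →
      entropyEta θ lam m ρ u * entropyEta θ lam n ρ u ≤
        C * (ρ * entropyEta θ lam (m + n) ρ u) :=
  stmt1_general θ lam hlam m n
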